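/- arXiv:2312.16934 — 4 statements merged into one kernel-verified Lean document; each statement's English description precedes it below -/
import Mathlib

section
/- Let (M,g) be a connected Riemannian manifold with a nowhere-vanishing vector field ξ, and let ∇̃ be an affine connection on M such that ∇̃ξ = 0, ∇̃_X g = 0 for all X orthogonal to ξ, and the torsion T̃ satisfies g(T̃(X,Y), ξ) = 0 for all X, Y orthogonal to ξ. Then the distribution D = {X : g(X,ξ) = 0} is integrable. -/
/-- On a (connected) Riemannian manifold `(M,g)` with a nowhere-vanishing
vector field `ξ` and an affine connection `∇̃` (`Dt`) such that `∇̃ξ = 0`, `∇̃_X g = 0`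
for all `X ⊥ ξ`, and `g(T̃(X,Y),ξ) = 0` for all `X, Y ⊥ ξ`, the distribution
`D = {X : g(X,ξ) = 0}` is integrable, i.e. closed under the Lie bracket.

The (module of) vector fields is modelled as a module `V` over the commutative ring `C`
of smooth functions; `act X` is the derivation action of the vector field `X` on
functions; `g` is the (symmetric) metric; `bracket` is the Lie bracket of vector fields;
`Dt` is the affine connection `∇̃`, whose torsion is
`T̃(X,Y) = ∇̃_X Y − ∇̃_Y X − [X,Y]`. -/
theorem integrability_of_orthogonal_distribution
    {C V : Type*} [CommRing C] [AddCommGroup V] [Module C V]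
    (g : V →ₗ[C] V →ₗ[C] C) (hsym : ∀ X Y : V, g X Y = g Y X)
    (bracket : V → V → V) (act : V → C →+ C)
    (ξ : V) (hξ : ξ ≠ 0)
    (Dt : V → V → V)
    -- `∇̃ ξ = 0`
    (hξpar : ∀ X : V, Dt X ξ = 0)
    -- `∇̃_X g = 0` for all `X` orthogonal to `ξ`
    (hmet : ∀ X : V, g X ξ = 0 → ∀ Y Z : V,
      act X (g Y Z) = g (Dt X Y) Z + g Y (Dt X Z))
    -- the torsion of `∇̃` applied to two fields orthogonal to `ξ` is orthogonal to `ξ`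
    (htor : ∀ X Y : V, g X ξ = 0 → g Y ξ = 0 →
      g (Dt X Y - Dt Y X - bracket X Y) ξ = 0) :
    ∀ X Y : V, g X ξ = 0 → g Y ξ = 0 → g (bracket X Y) ξ = 0 := by
  intro X Y hX hY
  have h1 : g (Dt X Y) ξ = 0 := by
    have := hmet X hX Y ξ
    simpa [hY, hξpar] using this.symm
  have h2 : g (Dt Y X) ξ = 0 := by
    have := hmet Y hY X ξ
    simpa [hX, hξpar] using this.symm
  have h3 := htor X Y hX hY
  simp only [map_sub, LinearMap.sub_apply, h1, h2] at h3
  linear_combination -h3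
end

section
/- Let A ∈ GL(n,ℝ) and suppose the cyclic group L(A) = {A^k : k ∈ ℤ} has a limit point in GL(n,ℂ) along a convergent subsequence {A^{k_n}} with A diagonalizable. Then every eigenvalue of A has absolute value 1, and if moreover L(A) is closed in GL(n,ℝ), all eigenvalues are roots of unity and L(A) is a finite cyclic group. -/
/-!
If `v` is an eigenvector for `μ`, then `‖μ‖ ^ kₘ ‖v‖ = ‖Aᵏᵐ v‖ → ‖L v‖ ≠ 0`, which forces
`‖μ‖ = 1`. If moreover the set of powers of `A` is closed, it is a countable locally compact space,
hence by Baire it has an isolated point, and multiplying by powers of `A` shows that the limit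
of `Aᵏᵐ`, which lies in that set, is isolated as well. So `Aᵏᵐ` is eventually constant and `A`
has finite order; the eigenvalues are then roots of unity.
-/

open Filter Topology
open scoped Matrix

instance Matrix.locallyCompactSpace {m n R : Type*} [Finite m] [Finite n] [TopologicalSpace R]
    [LocallyCompactSpace R] : LocallyCompactSpace (Matrix m n R) :=
  inferInstanceAs (LocallyCompactSpace (m → n → R))

theorem StrictMono.tendsto_atTop_int {k : ℕ → ℤ} (hk : StrictMono k) :
    Tendsto k atTop atTop := by
  have hle : ∀ m : ℕ, k 0 + m ≤ k m := by
    intro m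
    induction m with
    | zero => simp
    | succ m ih => have := hk (lt_add_one m); push_cast; omega
  exact tendsto_atTop_mono hle (tendsto_atTop_add_const_left _ _ tendsto_natCast_atTop_atTop)

section Limits

variable {α : Type*} {l : Filter α} {k : α → ℤ}

theorem Int.tendsto_toNat_comp (hk : Tendsto k l atTop) :
    Tendsto (fun a => (k a).toNat) l atTop :=
  tendsto_atTop.2 fun b => (hk.eventually_ge_atTop b).mono fun _ h => by omega

theorem Units.eventually_val_zpow_eq_pow_toNat {M : Type*} [Monoid M] (u : Mˣ)
    (hk : Tendsto k l atTop) : ∀ᶠ a in l, ((u ^ k a : Mˣ) : M) = (u : M) ^ (k a).toNat := by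
  filter_upwards [hk.eventually_ge_atTop 0] with a ha
  rw [← Units.val_pow_eq_pow_val, ← zpow_natCast, Int.toNat_of_nonneg ha]

theorem eq_one_of_tendsto_pow {k : α → ℕ} [l.NeBot] (hk : Tendsto k l atTop) {r c : ℝ}
    (hr : 0 ≤ r) (hc : c ≠ 0) (h : Tendsto (fun a => r ^ k a) l (𝓝 c)) : r = 1 := by
  rcases lt_trichotomy r 1 with hlt | heq | hgt
  · exact absurd (tendsto_nhds_unique h ((tendsto_pow_atTop_nhds_zero_of_lt_one hr hlt).comp hk)) hc
  · exact heq
  · exact absurd ((tendsto_pow_atTop_atTop_of_one_lt hgt).comp hk)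
      (not_tendsto_atTop_of_tendsto_nhds h)

end Limits

section Eigenvalues

variable {ι 𝕜 α : Type*} [Fintype ι] [DecidableEq ι] [NormedField 𝕜] {l : Filter α} [l.NeBot]

theorem Matrix.norm_eq_one_of_tendsto_pow {M L : Matrix ι ι 𝕜} {k : α → ℕ}
    (hk : Tendsto k l atTop) (hL : IsUnit L) (h : Tendsto (fun a => M ^ k a) l (𝓝 L))
    {μ : 𝕜} (hμ : μ ∈ spectrum 𝕜 M) : ‖μ‖ = 1 := by
  rw [← Matrix.spectrum_toLin', ← Module.End.hasEigenvalue_iff_mem_spectrum] at hμ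
  obtain ⟨v, hv⟩ := hμ.exists_hasEigenvector
  have hpow : ∀ j : ℕ, M ^ j *ᵥ v = μ ^ j • v := fun j => by
    rw [← Matrix.toLin'_apply, Matrix.toLin'_pow]
    exact hv.pow_apply j
  have hLv : L *ᵥ v ≠ 0 := fun h0 =>
    hv.2 (Matrix.mulVec_injective_iff_isUnit.2 hL (h0.trans (Matrix.mulVec_zero L).symm))
  have hv0 : ‖v‖ ≠ 0 := norm_ne_zero_iff.2 hv.2
  have hnorm : Tendsto (fun a => ‖M ^ k a *ᵥ v‖ / ‖v‖) l (𝓝 (‖L *ᵥ v‖ / ‖v‖)) :=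
    (((continuous_id.matrix_mulVec continuous_const).norm.tendsto L).comp h).div_const _
  refine eq_one_of_tendsto_pow hk (norm_nonneg μ) (div_ne_zero (norm_ne_zero_iff.2 hLv) hv0) ?_
  refine hnorm.congr fun a => ?_
  rw [hpow, norm_smul, norm_pow, mul_div_cancel_right₀ _ hv0]

theorem Matrix.norm_eq_one_of_tendsto_zpow {u : (Matrix ι ι 𝕜)ˣ} {L : Matrix ι ι 𝕜} {k : α → ℤ}
    (hk : Tendsto k l atTop) (hL : IsUnit L)
    (h : Tendsto (fun a => ((u ^ k a : (Matrix ι ι 𝕜)ˣ) : Matrix ι ι 𝕜)) l (𝓝 L))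
    {μ : 𝕜} (hμ : μ ∈ spectrum 𝕜 (u : Matrix ι ι 𝕜)) : ‖μ‖ = 1 :=
  Matrix.norm_eq_one_of_tendsto_pow (Int.tendsto_toNat_comp hk) hL
    (h.congr' (u.eventually_val_zpow_eq_pow_toNat hk)) hμ

end Eigenvalues

theorem spectrum.pow_eq_one_of_pow_eq_one {𝕜 A : Type*} [Field 𝕜] [Ring A] [Algebra 𝕜 A] {a : A}
    {m : ℕ} (ha : a ^ m = 1) {μ : 𝕜} (hμ : μ ∈ spectrum 𝕜 a) : μ ^ m = 1 := by
  rcases subsingleton_or_nontrivial A with hA | hA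
  · simp [spectrum.of_subsingleton] at hμ
  · simpa [ha, spectrum.one_eq] using spectrum.pow_mem_pow a m hμ

theorem IsClosed.exists_singleton_mem_nhdsWithin_of_countable {X : Type*} [TopologicalSpace X]
    [T2Space X] [LocallyCompactSpace X] {s : Set X} (hs : IsClosed s) (hc : s.Countable)
    (hne : s.Nonempty) : ∃ x ∈ s, {x} ∈ 𝓝[s] x := by
  have := hs.locallyCompactSpace
  have := hc.to_subtype
  have := hne.to_subtype
  obtain ⟨y, z, hz⟩ := nonempty_interior_of_iUnion_of_closed (f := fun y : s => {y})
    (fun _ => isClosed_singleton) (Set.iUnion_of_singleton s)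
  have hzy : z = y := Set.mem_singleton_iff.1 (interior_subset hz)
  subst hzy
  refine ⟨z, z.2, ?_⟩
  rw [← map_nhds_subtype_val, mem_map]
  exact mem_of_superset (mem_interior_iff_mem_nhds.1 hz) fun w hw => congrArg Subtype.val hw

theorem Units.isOfFinOrder_of_isClosed_range_zpow {M α : Type*} [Monoid M] [TopologicalSpace M]
    [T2Space M] [LocallyCompactSpace M] [ContinuousMul M] {u : Mˣ}
    (hS : IsClosed (Set.range fun j : ℤ => ((u ^ j : Mˣ) : M))) {l : Filter α} [l.NeBot]
    {k : α → ℤ} (hk : Tendsto k l atTop) {x : M}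
    (hx : Tendsto (fun a => ((u ^ k a : Mˣ) : M)) l (𝓝 x)) : IsOfFinOrder u := by
  set S := Set.range fun j : ℤ => ((u ^ j : Mˣ) : M)
  obtain ⟨_, ⟨t, rfl⟩, hiso⟩ :=
    hS.exists_singleton_mem_nhdsWithin_of_countable (Set.countable_range _) ⟨_, 0, rfl⟩
  obtain ⟨t₀, rfl⟩ : x ∈ S := hS.mem_of_tendsto hx (Eventually.of_forall fun a => ⟨k a, rfl⟩)
  -- translating by `u ^ (t - t₀)` moves the limit onto the isolated point `u ^ t`
  have hshift : Tendsto (fun a => ((u ^ (t - t₀ + k a) : Mˣ) : M)) l (𝓝[S] ↑(u ^ t)) := by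
    refine tendsto_nhdsWithin_iff.2 ⟨?_, Eventually.of_forall fun a => ⟨_, rfl⟩⟩
    have := hx.const_mul ((u ^ (t - t₀) : Mˣ) : M)
    simpa only [← Units.val_mul, ← zpow_add, sub_add_cancel] using this
  obtain ⟨a, hfix, hpos⟩ :=
    ((hshift.eventually_mem hiso).and (hk.eventually_gt_atTop t₀)).exists
  refine isOfFinOrder_iff_zpow_eq_one.2 ⟨k a - t₀, sub_ne_zero.2 hpos.ne', ?_⟩
  have hconst : u ^ (t - t₀ + k a) = u ^ t := Units.ext hfix
  rw [show k a - t₀ = t - t₀ + k a - t by ring, zpow_sub, hconst, mul_inv_cancel]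

theorem powers_with_limit_point_have_unimodular_eigenvalues_general
    (n : ℕ) (A : GL (Fin n) ℝ) (Ac : (Matrix (Fin n) (Fin n) ℂ)ˣ)
    (hAc : (Ac : Matrix (Fin n) (Fin n) ℂ) =
      ((A : Matrix (Fin n) (Fin n) ℝ)).map Complex.ofReal)
    -- a convergent subsequence of powers with invertible limit
    (hconv : ∃ k : ℕ → ℤ, StrictMono k ∧ ∃ L : Matrix (Fin n) (Fin n) ℂ, IsUnit L ∧
      Tendsto (fun m => ((Ac ^ k m : (Matrix (Fin n) (Fin n) ℂ)ˣ) :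
        Matrix (Fin n) (Fin n) ℂ)) atTop (𝓝 L)) :
    (∀ μ ∈ spectrum ℂ (Ac : Matrix (Fin n) (Fin n) ℂ), ‖μ‖ = 1) ∧
    (IsClosed (Set.range fun k : ℤ =>
        ((A ^ k : GL (Fin n) ℝ) : Matrix (Fin n) (Fin n) ℝ)) →
      (∀ μ ∈ spectrum ℂ (Ac : Matrix (Fin n) (Fin n) ℂ), ∃ m : ℕ, 0 < m ∧ μ ^ m = 1) ∧
      (Set.range fun k : ℤ => A ^ k).Finite) := by
  obtain ⟨k, hk_mono, L, hL, hlim⟩ := hconv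
  have hk : Tendsto k atTop atTop := hk_mono.tendsto_atTop_int
  refine ⟨fun μ hμ => Matrix.norm_eq_one_of_tendsto_zpow hk hL hlim hμ, fun hclosed => ?_⟩
  set φ : Matrix (Fin n) (Fin n) ℝ →* Matrix (Fin n) (Fin n) ℂ :=
    (Complex.ofRealHom.mapMatrix : Matrix (Fin n) (Fin n) ℝ →+* _).toMonoidHom
  have hAc : Ac = Units.map φ A := Units.ext hAc
  have hre : ∀ j : ℤ, ((Ac ^ j : (Matrix (Fin n) (Fin n) ℂ)ˣ) : Matrix (Fin n) (Fin n) ℂ).map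
      Complex.re = ((A ^ j : GL (Fin n) ℝ) : Matrix (Fin n) (Fin n) ℝ) := fun j => by
    ext
    simp [hAc, ← map_zpow, φ]
  have hA : IsOfFinOrder A := Units.isOfFinOrder_of_isClosed_range_zpow hclosed hk
    ((((continuous_id.matrix_map Complex.continuous_re).tendsto L).comp hlim).congr fun m => hre _)
  obtain ⟨m, hm, hAcm⟩ := isOfFinOrder_iff_pow_eq_one.1
    (Units.isOfFinOrder_val.2 (hAc ▸ (Units.map φ).isOfFinOrder hA))
  refine ⟨fun μ hμ => ⟨m, hm, spectrum.pow_eq_one_of_pow_eq_one hAcm hμ⟩, ?_⟩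
  simpa only [Subgroup.coe_zpowers] using hA.finite_zpowers

/-- Let `A ∈ GL(n,ℝ)` be diagonalizable over `ℂ`, and suppose the cyclic
group `L(A) = {A^k : k ∈ ℤ}` has a limit point in `GL(n,ℂ)` along a convergent
subsequence `{A^{k_n}}` (with invertible limit).  Then every (complex) eigenvalue of `A`
has absolute value `1`, and if moreover `L(A)` is closed in `GL(n,ℝ)`, all eigenvalues
are roots of unity and `L(A)` is a finite (cyclic) group.

Here `Ac` is the complexification of `A`, and eigenvalues are the elements of the
spectrum of the complex matrix. -/
theorem powers_with_limit_point_have_unimodular_eigenvalues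
    (n : ℕ) (A : GL (Fin n) ℝ) (Ac : (Matrix (Fin n) (Fin n) ℂ)ˣ)
    (hAc : (Ac : Matrix (Fin n) (Fin n) ℂ) =
      ((A : Matrix (Fin n) (Fin n) ℝ)).map Complex.ofReal)
    -- `A` is diagonalizable over `ℂ`
    (hdiag : ∃ (P : Matrix (Fin n) (Fin n) ℂ) (d : Fin n → ℂ), IsUnit P ∧
      (Ac : Matrix (Fin n) (Fin n) ℂ) = P * Matrix.diagonal d * P⁻¹)
    -- a convergent subsequence of powers with invertible limit
    (hconv : ∃ k : ℕ → ℤ, StrictMono k ∧ ∃ L : Matrix (Fin n) (Fin n) ℂ, IsUnit L ∧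
      Tendsto (fun m => ((Ac ^ k m : (Matrix (Fin n) (Fin n) ℂ)ˣ) :
        Matrix (Fin n) (Fin n) ℂ)) atTop (𝓝 L)) :
    (∀ μ ∈ spectrum ℂ (Ac : Matrix (Fin n) (Fin n) ℂ), ‖μ‖ = 1) ∧
    (IsClosed (Set.range fun k : ℤ =>
        ((A ^ k : GL (Fin n) ℝ) : Matrix (Fin n) (Fin n) ℝ)) →
      (∀ μ ∈ spectrum ℂ (Ac : Matrix (Fin n) (Fin n) ℂ), ∃ m : ℕ, 0 < m ∧ μ ^ m = 1) ∧
      (Set.range fun k : ℤ => A ^ k).Finite) :=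
  powers_with_limit_point_have_unimodular_eigenvalues_general n A Ac hAc hconv
end

section
/- Let (V,g) be an n-dimensional real inner product space and let T(V) be the space of trilinear forms S on V with S_{XYZ} = −S_{XZY}. Then T(V) decomposes as the direct sum of: T₁(V) = {S : S_{XYZ} = g(X,Y)θ(Z) − g(X,Z)θ(Y), θ ∈ V*}, T₂(V) = {S : the cyclic sum over X,Y,Z of S_{XYZ} vanishes and the trace c₁₂(S) = 0}, and T₃(V) = {S : S_{XYZ} = −S_{YXZ}}, and these three subspaces intersect pairwise only in 0 (for n ≥ 3). -/
/-!
Put `S₃ = ⅓ 𝔖S`, which is alternating as soon as `S` is skew in its last two slots; then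
`S - S₃` has vanishing cyclic sum, because `𝔖𝔖S = 3𝔖S`. Its trace is that of `S`, since
`c₁₂(𝔖S) = 0`, and the `T₁`-form of `θ` has trace `(n - 1)θ` while its cyclic sum vanishes
by the symmetry of `g`; so subtracting the `T₁`-form of `θ = c₁₂(S)/(n - 1)` lands in `T₂`.
The same trace formula gives `T₁ ∩ T₂ = T₁ ∩ T₃ = 0`, elements of `T₃` being traceless, and a
form alternating in all three slots has `𝔖S = 3S`, whence `T₂ ∩ T₃ = 0`.
-/

open RealInnerProductSpace

section

variable {V : Type*} [NormedAddCommGroup V] [InnerProductSpace ℝ V]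
  {ι κ : Type*} [Fintype ι] [Fintype κ]

lemma OrthonormalBasis.sum_bilin_apply_self_eq (B : V →ₗ[ℝ] V →ₗ[ℝ] ℝ)
    (b : OrthonormalBasis ι ℝ V) (c : OrthonormalBasis κ ℝ V) :
    ∑ i, B (b i) (b i) = ∑ j, B (c j) (c j) := by
  calc ∑ i, B (b i) (b i) = ∑ i, ∑ j, ⟪c j, b i⟫ * B (b i) (c j) := by
        refine Finset.sum_congr rfl fun i _ => ?_
        rw [← congrArg (B (b i)) (c.sum_repr' (b i))]
        simp [map_sum]
    _ = ∑ j, ∑ i, ⟪b i, c j⟫ * B (b i) (c j) := by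
        rw [Finset.sum_comm]; simp only [real_inner_comm]
    _ = ∑ j, B (c j) (c j) := by
        refine Finset.sum_congr rfl fun j _ => ?_
        simpa [map_sum] using congrArg (B.flip (c j)) (b.sum_repr' (c j))

noncomputable def trace₁₂ (b : OrthonormalBasis ι ℝ V) :
    (V →ₗ[ℝ] V →ₗ[ℝ] V →ₗ[ℝ] ℝ) →ₗ[ℝ] V →ₗ[ℝ] ℝ :=
  ∑ i, LinearMap.applyₗ (b i) ∘ₗ LinearMap.applyₗ (b i)

lemma trace₁₂_apply (b : OrthonormalBasis ι ℝ V) (S : V →ₗ[ℝ] V →ₗ[ℝ] V →ₗ[ℝ] ℝ) (Z : V) :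
    trace₁₂ b S Z = ∑ i, S (b i) (b i) Z := by
  simp [trace₁₂]

lemma trace₁₂_eq_trace₁₂ (S : V →ₗ[ℝ] V →ₗ[ℝ] V →ₗ[ℝ] ℝ)
    (b : OrthonormalBasis ι ℝ V) (c : OrthonormalBasis κ ℝ V) :
    trace₁₂ b S = trace₁₂ c S := by
  ext Z
  simpa [trace₁₂_apply] using
    OrthonormalBasis.sum_bilin_apply_self_eq (S.compr₂ (LinearMap.applyₗ Z)) b c

-- Tricerri–Vanhecke's homogeneous structures of vectorial type.
noncomputable def vectorialForm (θ : V →ₗ[ℝ] ℝ) : V →ₗ[ℝ] V →ₗ[ℝ] V →ₗ[ℝ] ℝ :=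
  LinearMap.mk₂ ℝ (fun X Y => ⟪X, Y⟫ • θ - θ Y • innerₗ V X)
    (fun X X' Y => by ext Z; simp [inner_add_left]; ring)
    (fun c X Y => by ext Z; simp [inner_smul_left]; ring)
    (fun X Y Y' => by ext Z; simp [inner_add_right]; ring)
    (fun c X Y => by ext Z; simp [inner_smul_right]; ring)

@[simp] lemma vectorialForm_apply (θ : V →ₗ[ℝ] ℝ) (X Y Z : V) :
    vectorialForm θ X Y Z = ⟪X, Y⟫ * θ Z - ⟪X, Z⟫ * θ Y := by
  simp [vectorialForm, mul_comm]

lemma vectorialForm_apply_swap (θ : V →ₗ[ℝ] ℝ) (X Y Z : V) :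
    vectorialForm θ X Y Z = - vectorialForm θ X Z Y := by
  simp only [vectorialForm_apply]; ring

noncomputable def cyclicSum (S : V →ₗ[ℝ] V →ₗ[ℝ] V →ₗ[ℝ] ℝ) : V →ₗ[ℝ] V →ₗ[ℝ] V →ₗ[ℝ] ℝ :=
  LinearMap.mk₂ ℝ (fun X Y => S X Y + (S Y).flip X + (S.flip X).flip Y)
    (fun X X' Y => by ext Z; simp; ring)
    (fun c X Y => by ext Z; simp)
    (fun X Y Y' => by ext Z; simp; ring)
    (fun c X Y => by ext Z; simp)

@[simp] lemma cyclicSum_apply (S : V →ₗ[ℝ] V →ₗ[ℝ] V →ₗ[ℝ] ℝ) (X Y Z : V) :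
    cyclicSum S X Y Z = S X Y Z + S Y Z X + S Z X Y := by
  simp [cyclicSum]

lemma trace₁₂_vectorialForm (b : OrthonormalBasis ι ℝ V) (θ : V →ₗ[ℝ] ℝ) :
    trace₁₂ b (vectorialForm θ) = (Fintype.card ι - 1 : ℝ) • θ := by
  ext Z
  have hθ : ∑ i, ⟪b i, Z⟫ * θ (b i) = θ Z := by
    conv_rhs => rw [← b.sum_repr' Z]
    simp [map_sum]
  simp only [trace₁₂_apply, vectorialForm_apply, real_inner_self_eq_norm_sq, b.orthonormal.1,
    one_pow, one_mul, Finset.sum_sub_distrib, Finset.sum_const, Finset.card_univ, nsmul_eq_mul, hθ,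
    LinearMap.smul_apply, smul_eq_mul]
  ring

variable {S : V →ₗ[ℝ] V →ₗ[ℝ] V →ₗ[ℝ] ℝ}

lemma cyclicSum_apply_swap_left (hS : ∀ X Y Z, S X Y Z = - S X Z Y) (X Y Z : V) :
    cyclicSum S X Y Z = - cyclicSum S Y X Z := by
  simp only [cyclicSum_apply]
  linarith [hS X Z Y, hS Y X Z, hS Z Y X]

lemma cyclicSum_apply_swap_right (hS : ∀ X Y Z, S X Y Z = - S X Z Y) (X Y Z : V) :
    cyclicSum S X Y Z = - cyclicSum S X Z Y := by
  simp only [cyclicSum_apply]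
  linarith [hS X Z Y, hS Y X Z, hS Z Y X]

lemma trace₁₂_cyclicSum (hS : ∀ X Y Z, S X Y Z = - S X Z Y) (b : OrthonormalBasis ι ℝ V) :
    trace₁₂ b (cyclicSum S) = 0 := by
  ext Z
  refine (trace₁₂_apply _ _ _).trans (Finset.sum_eq_zero fun i _ => ?_)
  simp only [cyclicSum_apply]
  linarith [hS (b i) Z (b i), hS Z (b i) (b i)]

lemma eq_zero_of_alternating_of_cyclic_sum_eq_zero (hS : ∀ X Y Z, S X Y Z = - S X Z Y)
    (hS' : ∀ X Y Z, S X Y Z = - S Y X Z) (hcyc : ∀ X Y Z, S X Y Z + S Y Z X + S Z X Y = 0) :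
    S = 0 := by
  ext X Y Z
  simp only [LinearMap.zero_apply]
  linarith [hS Y Z X, hS' Y X Z, hS Z X Y, hS' Z Y X, hcyc X Y Z]

lemma trace₁₂_eq_zero_of_skew_left (hS : ∀ X Y Z, S X Y Z = - S Y X Z)
    (b : OrthonormalBasis ι ℝ V) : trace₁₂ b S = 0 := by
  ext Z
  refine (trace₁₂_apply _ _ _).trans (Finset.sum_eq_zero fun i _ => ?_)
  linarith [hS (b i) (b i) Z]

lemma vectorialForm_eq_zero_of_trace₁₂_eq_zero (b : OrthonormalBasis ι ℝ V)
    (hι : Fintype.card ι ≠ 1) {θ : V →ₗ[ℝ] ℝ} (hθ : trace₁₂ b (vectorialForm θ) = 0) :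
    vectorialForm θ = 0 := by
  rw [trace₁₂_vectorialForm] at hθ
  obtain rfl := (smul_eq_zero.mp hθ).resolve_left (sub_ne_zero.mpr (by exact_mod_cast hι))
  ext
  simp

theorem exists_eq_vectorialForm_add_add (b₀ : OrthonormalBasis ι ℝ V) (hι : Fintype.card ι ≠ 1)
    (hS : ∀ X Y Z, S X Y Z = - S X Z Y) :
    ∃ θ S₂, (∀ X Y Z, S₂ X Y Z = - S₂ X Z Y) ∧ cyclicSum S₂ = 0 ∧
      (∀ b : OrthonormalBasis ι ℝ V, trace₁₂ b S₂ = 0) ∧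
      S = vectorialForm θ + S₂ + (3 : ℝ)⁻¹ • cyclicSum S := by
  have hι' : (Fintype.card ι - 1 : ℝ) ≠ 0 := sub_ne_zero.mpr (by exact_mod_cast hι)
  set θ := (Fintype.card ι - 1 : ℝ)⁻¹ • trace₁₂ b₀ S
  -- instance search does not find `Sub` on `V →ₗ[ℝ] V →ₗ[ℝ] V →ₗ[ℝ] ℝ`, hence the scalars `-1`
  refine ⟨θ, S + (-1 : ℝ) • vectorialForm θ + (-3⁻¹ : ℝ) • cyclicSum S, fun X Y Z => ?_, ?_,
    fun b => ?_, ?_⟩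
  · simp only [LinearMap.add_apply, LinearMap.smul_apply, smul_eq_mul]
    rw [hS X Y Z, vectorialForm_apply_swap, cyclicSum_apply_swap_right hS]
    ring
  · ext X Y Z
    simp only [cyclicSum_apply, LinearMap.add_apply, LinearMap.smul_apply, vectorialForm_apply,
      smul_eq_mul, LinearMap.zero_apply]
    rw [real_inner_comm Y X, real_inner_comm Z X, real_inner_comm Z Y]
    ring
  · rw [map_add, map_add, map_smul, map_smul, trace₁₂_vectorialForm, trace₁₂_cyclicSum hS,
      trace₁₂_eq_trace₁₂ S b b₀]
    ext Z
    simp only [LinearMap.add_apply, LinearMap.smul_apply, smul_eq_mul, LinearMap.zero_apply, θ]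
    field_simp
    ring
  · ext X Y Z
    simp only [LinearMap.add_apply, LinearMap.smul_apply, smul_eq_mul, cyclicSum_apply,
      vectorialForm_apply]
    ring

end

/-- Let `(V,g)` be an `n`-dimensional real inner product space, `n ≥ 3`,
and `T(V)` the space of trilinear forms `S` on `V` with `S_{XYZ} = −S_{XZY}`.  Then
`T(V)` decomposes as the direct sum of
`T₁(V) = {S : S_{XYZ} = g(X,Y)θ(Z) − g(X,Z)θ(Y)}`,
`T₂(V) = {S : 𝔖_{XYZ} S_{XYZ} = 0, c₁₂(S) = 0}` and
`T₃(V) = {S : S_{XYZ} = −S_{YXZ}}`: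
every `S ∈ T(V)` is a sum of elements of the three classes, and the three classes
intersect pairwise only in `0`. -/
theorem decomposition_of_homogeneous_structures
    {V : Type*} [NormedAddCommGroup V] [InnerProductSpace ℝ V] [FiniteDimensional ℝ V]
    (n : ℕ) (hn : 3 ≤ n) (hdim : Module.finrank ℝ V = n) :
    -- existence of the decomposition
    ((∀ S : V →ₗ[ℝ] V →ₗ[ℝ] V →ₗ[ℝ] ℝ, (∀ X Y Z : V, S X Y Z = - S X Z Y) →
      ∃ S₁ S₂ S₃ : V →ₗ[ℝ] V →ₗ[ℝ] V →ₗ[ℝ] ℝ,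
        (∀ X Y Z : V, S₁ X Y Z = - S₁ X Z Y) ∧
        (∀ X Y Z : V, S₂ X Y Z = - S₂ X Z Y) ∧
        (∀ X Y Z : V, S₃ X Y Z = - S₃ X Z Y) ∧
        (∃ θ : V →ₗ[ℝ] ℝ, ∀ X Y Z : V,
          S₁ X Y Z = ⟪X, Y⟫ * θ Z - ⟪X, Z⟫ * θ Y) ∧
        ((∀ X Y Z : V, S₂ X Y Z + S₂ Y Z X + S₂ Z X Y = 0) ∧
          (∀ (b : OrthonormalBasis (Fin n) ℝ V) (Z : V), ∑ i, S₂ (b i) (b i) Z = 0)) ∧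
        (∀ X Y Z : V, S₃ X Y Z = - S₃ Y X Z) ∧
        S = S₁ + S₂ + S₃)) ∧
    -- `T₁ ∩ T₂ = 0`
    (∀ S : V →ₗ[ℝ] V →ₗ[ℝ] V →ₗ[ℝ] ℝ, (∀ X Y Z : V, S X Y Z = - S X Z Y) →
      (∃ θ : V →ₗ[ℝ] ℝ, ∀ X Y Z : V, S X Y Z = ⟪X, Y⟫ * θ Z - ⟪X, Z⟫ * θ Y) →
      ((∀ X Y Z : V, S X Y Z + S Y Z X + S Z X Y = 0) ∧
        (∀ (b : OrthonormalBasis (Fin n) ℝ V) (Z : V), ∑ i, S (b i) (b i) Z = 0)) →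
      S = 0) ∧
    -- `T₁ ∩ T₃ = 0`
    (∀ S : V →ₗ[ℝ] V →ₗ[ℝ] V →ₗ[ℝ] ℝ, (∀ X Y Z : V, S X Y Z = - S X Z Y) →
      (∃ θ : V →ₗ[ℝ] ℝ, ∀ X Y Z : V, S X Y Z = ⟪X, Y⟫ * θ Z - ⟪X, Z⟫ * θ Y) →
      (∀ X Y Z : V, S X Y Z = - S Y X Z) →
      S = 0) ∧
    -- `T₂ ∩ T₃ = 0`
    (∀ S : V →ₗ[ℝ] V →ₗ[ℝ] V →ₗ[ℝ] ℝ, (∀ X Y Z : V, S X Y Z = - S X Z Y) →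
      ((∀ X Y Z : V, S X Y Z + S Y Z X + S Z X Y = 0) ∧
        (∀ (b : OrthonormalBasis (Fin n) ℝ V) (Z : V), ∑ i, S (b i) (b i) Z = 0)) →
      (∀ X Y Z : V, S X Y Z = - S Y X Z) →
      S = 0) := by
  have b₀ : OrthonormalBasis (Fin n) ℝ V := (stdOrthonormalBasis ℝ V).reindex (finCongr hdim)
  have hcard : Fintype.card (Fin n) ≠ 1 := by rw [Fintype.card_fin]; omega
  refine ⟨fun S hS => ?_, ?_, ?_, ?_⟩
  · obtain ⟨θ, S₂, hS₂, hcyc, htr, hdecomp⟩ := exists_eq_vectorialForm_add_add b₀ hcard hS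
    refine ⟨vectorialForm θ, S₂, (3 : ℝ)⁻¹ • cyclicSum S, vectorialForm_apply_swap θ, hS₂,
      fun X Y Z => ?_, ⟨θ, vectorialForm_apply θ⟩,
      ⟨fun X Y Z => by simpa using congr($hcyc X Y Z),
        fun b Z => by simpa [trace₁₂_apply] using congr($(htr b) Z)⟩,
      fun X Y Z => ?_, hdecomp⟩
    · simp only [LinearMap.smul_apply, smul_eq_mul]
      rw [cyclicSum_apply_swap_right hS X Y Z, mul_neg]
    · simp only [LinearMap.smul_apply, smul_eq_mul]
      rw [cyclicSum_apply_swap_left hS X Y Z, mul_neg]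
  · rintro S - ⟨θ, hθ⟩ ⟨-, htr⟩
    obtain rfl : S = vectorialForm θ := by ext; simp [hθ]
    refine vectorialForm_eq_zero_of_trace₁₂_eq_zero b₀ hcard ?_
    ext Z
    simpa [trace₁₂_apply] using htr b₀ Z
  · rintro S - ⟨θ, hθ⟩ hS'
    obtain rfl : S = vectorialForm θ := by ext; simp [hθ]
    exact vectorialForm_eq_zero_of_trace₁₂_eq_zero b₀ hcard (trace₁₂_eq_zero_of_skew_left hS' b₀)
  · rintro S hS ⟨hcyc, -⟩ hS'
    exact eq_zero_of_alternating_of_cyclic_sum_eq_zero hS hS' hcyc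
end

section
/- Let S₁ and S₂ be two (1,2)-tensors on a Riemannian manifold (M,g) with unit vector field ξ, such that both ∇̃ᵢ = ∇ − Sᵢ satisfy: ∇̃ᵢ ξ = 0, (Sᵢ)_ξ ξ = 0, (Sᵢ)_X is g-skew for X ∈ D = ξ^⊥, and torsion T̃ᵢ(ξ, ·) = 0. If (S₁)_X Y = (S₂)_X Y for all X, Y ∈ D, then S₁ = S₂. -/
/-- Let `S₁`, `S₂` be two `(1,2)`-tensors on a Riemannian manifold `(M,g)`
with unit vector field `ξ` (with `∇_ξ ξ = 0`), such that for `i = 1,2` the connection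
`∇̃ᵢ = ∇ − Sᵢ` satisfies `∇̃ᵢ ξ = 0`, `(Sᵢ)_ξ ξ = 0`, `(Sᵢ)_X` is `g`-skew for all
`X ∈ D = ξ^⊥`, and the torsion `T̃ᵢ(ξ, ·) = 0` (equivalently `(Sᵢ)_A ξ = (Sᵢ)_ξ A`).
If `S₁` and `S₂` agree on `D × D`, then `S₁ = S₂`.

Vector fields are modelled as a module `V` over the ring `C` of smooth functions,
the tensors `Sᵢ` being `C`-bilinear; `nabla` is the Levi-Civita connection and `g`
is a nondegenerate symmetric metric. -/
theorem uniqueness_of_cohomogeneity_one_structure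
    {C V : Type*} [CommRing C] [AddCommGroup V] [Module C V]
    (g : V →ₗ[C] V →ₗ[C] C) (hsym : ∀ A B : V, g A B = g B A)
    (hnondeg : ∀ v : V, (∀ w : V, g v w = 0) → v = 0)
    (ξ : V) (hunit : g ξ ξ = 1)
    (nabla : V → V → V)
    -- `ξ` is geodesic for the Levi-Civita connection
    (hgeo : nabla ξ ξ = 0)
    (S₁ S₂ : V →ₗ[C] V →ₗ[C] V)
    -- `∇̃ᵢ ξ = 0`, i.e. `∇_A ξ − (Sᵢ)_A ξ = 0`
    (hpar₁ : ∀ A : V, nabla A ξ - S₁ A ξ = 0)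
    (hpar₂ : ∀ A : V, nabla A ξ - S₂ A ξ = 0)
    -- `(Sᵢ)_ξ ξ = 0`
    (hSξξ₁ : S₁ ξ ξ = 0) (hSξξ₂ : S₂ ξ ξ = 0)
    -- `(Sᵢ)_X` is `g`-skew for `X ∈ D`
    (hskew₁ : ∀ X : V, g X ξ = 0 → ∀ Y Z : V, g (S₁ X Y) Z + g Y (S₁ X Z) = 0)
    (hskew₂ : ∀ X : V, g X ξ = 0 → ∀ Y Z : V, g (S₂ X Y) Z + g Y (S₂ X Z) = 0)
    -- torsion `T̃ᵢ(ξ, A) = −(Sᵢ)_ξ A + (Sᵢ)_A ξ = 0`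
    (htor₁ : ∀ A : V, - S₁ ξ A + S₁ A ξ = 0)
    (htor₂ : ∀ A : V, - S₂ ξ A + S₂ A ξ = 0)
    -- the restrictions to `D × D` agree
    (hagree : ∀ X Y : V, g X ξ = 0 → g Y ξ = 0 → S₁ X Y = S₂ X Y) :
    S₁ = S₂ := by
  have hξeq : ∀ A : V, S₁ A ξ = S₂ A ξ := by
    intro A
    have h1 := sub_eq_zero.mp (hpar₁ A)
    have h2 := sub_eq_zero.mp (hpar₂ A)
    rw [← h1, ← h2]
  have hξleft₁ : ∀ A : V, S₁ ξ A = S₁ A ξ := fun A => (neg_add_eq_zero.mp (htor₁ A))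
  have hξleft₂ : ∀ A : V, S₂ ξ A = S₂ A ξ := fun A => (neg_add_eq_zero.mp (htor₂ A))
  ext A B
  have hAperp : g (A - g A ξ • ξ) ξ = 0 := by
    simp [hsym (A - g A ξ • ξ) ξ, hunit, mul_comm]
  have hBperp : g (B - g B ξ • ξ) ξ = 0 := by
    simp [hsym (B - g B ξ • ξ) ξ, hunit, mul_comm]
  have hA : A = g A ξ • ξ + (A - g A ξ • ξ) := by abel
  have hB : B = g B ξ • ξ + (B - g B ξ • ξ) := by abel
  calc S₁ A B = S₁ (g A ξ • ξ + (A - g A ξ • ξ)) (g B ξ • ξ + (B - g B ξ • ξ)) := by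
        rw [← hA, ← hB]
    _ = S₂ (g A ξ • ξ + (A - g A ξ • ξ)) (g B ξ • ξ + (B - g B ξ • ξ)) := by
        simp only [map_add, map_smul, LinearMap.add_apply, LinearMap.smul_apply,
          hξleft₁, hξleft₂, hξeq, hagree _ _ hAperp hBperp]
    _ = S₂ A B := by rw [← hA, ← hB]
end
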